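/- For X Erlang(k, μ) distributed and t > 0, the conditional survival function satisfies P(X > t + s | X > t) = Σ_{j=1}^{k} p̃_j(t) · Σ_{n=0}^{j-1} e^{-μs}(μs)^n/n!, where p̃_j(t) = (e^{-μt}(μt)^{k-j}/(k-j)!) / Σ_{n=0}^{k-1} e^{-μt}(μt)^n/n!. That is, the remaining lifetime of an Erlang(k, μ) random variable conditioned on exceeding t is a mixture of Erlang(j, μ) distributions, j = 1,…,k, with mixture weights p̃_j(t). -/
import Mathlib

open MeasureTheory ProbabilityTheory Real Finset

private lemma triangle_sum {M : Type*} [AddCommMonoid M] (k : ℕ) (F : ℕ → ℕ → M) :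
    (∑ n ∈ range k, ∑ i ∈ range (n + 1), F i (n - i)) =
      ∑ i ∈ range k, ∑ m ∈ range (k - i), F i m := by
  rw [Finset.sum_sigma', Finset.sum_sigma']
  refine sum_nbij' (fun x ↦ ⟨x.2, x.1 - x.2⟩) (fun x ↦ ⟨x.1 + x.2, x.1⟩) ?_ ?_ ?_ ?_ ?_
  · rintro ⟨n, i⟩ h
    simp only [Finset.mem_sigma, Finset.mem_range] at *
    omega
  · rintro ⟨i, m⟩ h
    simp only [Finset.mem_sigma, Finset.mem_range] at *
    omega
  · rintro ⟨n, i⟩ h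
    simp only [Finset.mem_sigma, Finset.mem_range] at h
    have hni : i + (n - i) = n := by omega
    simp [hni]
  · rintro ⟨i, m⟩ h
    simp only [Finset.mem_sigma, Finset.mem_range] at h
    have him : i + m - i = m := by omega
    simp [him]
  · rintro ⟨n, i⟩ h
    rfl

private lemma erlang_key (k : ℕ) (_hk : 1 ≤ k) (x y : ℝ) :
    (∑ j ∈ Icc 1 k, (exp (-x) * x ^ (k - j) / ((k - j).factorial : ℝ)) *
        ∑ n ∈ range j, exp (-y) * y ^ n / (n.factorial : ℝ)) =
      ∑ n ∈ range k, exp (-(x + y)) * (x + y) ^ n / (n.factorial : ℝ) := by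
  have step1 : (∑ j ∈ Icc 1 k, (exp (-x) * x ^ (k - j) / ((k - j).factorial : ℝ)) *
        ∑ n ∈ range j, exp (-y) * y ^ n / (n.factorial : ℝ)) =
      ∑ i ∈ range k, (exp (-x) * x ^ i / (i.factorial : ℝ)) *
        ∑ n ∈ range (k - i), exp (-y) * y ^ n / (n.factorial : ℝ) := by
    refine sum_nbij' (fun j ↦ k - j) (fun i ↦ k - i) ?_ ?_ ?_ ?_ ?_ <;>
      simp only [Finset.mem_Icc, Finset.mem_range] <;> intro a ha
    · omega
    · omega
    · omega
    · omega
    · have : k - (k - a) = a := by omega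
      rw [this]
  rw [step1]
  have step2 : ∀ n ∈ range k, exp (-(x + y)) * (x + y) ^ n / (n.factorial : ℝ) =
      ∑ i ∈ range (n + 1), (exp (-x) * x ^ i / (i.factorial : ℝ)) *
        (exp (-y) * y ^ (n - i) / ((n - i).factorial : ℝ)) := by
    intro n _
    rw [add_pow, Finset.mul_sum, Finset.sum_div]
    refine Finset.sum_congr rfl fun i hi ↦ ?_
    have hin : i ≤ n := Nat.lt_succ_iff.mp (Finset.mem_range.mp hi)
    have h1 : (0:ℝ) < (i.factorial : ℝ) := by positivity
    have h2 : (0:ℝ) < ((n - i).factorial : ℝ) := by positivity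
    have h3 : (0:ℝ) < (n.factorial : ℝ) := by positivity
    have hC : (n.choose i : ℝ) = (n.factorial : ℝ) /
        ((i.factorial : ℝ) * ((n - i).factorial : ℝ)) := by
      rw [eq_div_iff (by positivity)]
      rw_mod_cast [← Nat.choose_mul_factorial_mul_factorial hin]
      ring
    rw [neg_add, Real.exp_add, hC]
    field_simp
  rw [Finset.sum_congr rfl step2]
  rw [triangle_sum k (fun i m ↦ (exp (-x) * x ^ i / (i.factorial : ℝ)) *
        (exp (-y) * y ^ m / (m.factorial : ℝ)))]
  refine Finset.sum_congr rfl fun i _ ↦ ?_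
  rw [Finset.mul_sum]

/-- The remaining lifetime of an Erlang(k, μ) random variable conditioned on exceeding `t`
is a mixture of Erlang(j, μ) distributions, j = 1,…,k, with weights `p̃_j(t)`. -/
theorem conditional_erlang_mixture {Ω : Type*} [MeasurableSpace Ω]
    (P : Measure Ω) [IsProbabilityMeasure P] (X : Ω → ℝ)
    (k : ℕ) (hk : 1 ≤ k) (μ : ℝ) (hμ : 0 < μ)
    (hX : ∀ u : ℝ, 0 ≤ u → P {ω | X ω > u} =
      ENNReal.ofReal (∑ n ∈ range k, exp (-(μ * u)) * (μ * u) ^ n / (n.factorial : ℝ)))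
    (t s : ℝ) (ht : 0 < t) (hs : 0 ≤ s) :
    P[{ω | X ω > t + s} | {ω | X ω > t}] =
      ENNReal.ofReal (∑ j ∈ Icc 1 k,
        (exp (-(μ * t)) * (μ * t) ^ (k - j) / ((k - j).factorial : ℝ) /
            (∑ n ∈ range k, exp (-(μ * t)) * (μ * t) ^ n / (n.factorial : ℝ))) *
          ∑ n ∈ range j, exp (-(μ * s)) * (μ * s) ^ n / (n.factorial : ℝ)) := by
  set SB : ℝ := ∑ n ∈ range k, exp (-(μ * t)) * (μ * t) ^ n / (n.factorial : ℝ) with hSB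
  set SA : ℝ := ∑ n ∈ range k, exp (-(μ * (t + s))) * (μ * (t + s)) ^ n / (n.factorial : ℝ)
    with hSA
  have hμt : 0 < μ * t := by positivity
  have hSBpos : 0 < SB := by
    apply Finset.sum_pos
    · intro n _
      positivity
    · exact Finset.nonempty_range_iff.mpr (by omega)
  have hsub : {ω | X ω > t + s} ⊆ {ω | X ω > t} := by
    intro ω hω
    simp only [Set.mem_setOf_eq] at *
    linarith
  have hcond : P[{ω | X ω > t + s} | {ω | X ω > t}]
      = (P {ω | X ω > t})⁻¹ * P {ω | X ω > t + s} := by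
    rw [ProbabilityTheory.cond, Measure.smul_apply, smul_eq_mul,
      Measure.restrict_eq_self P hsub]
  rw [hcond, hX t ht.le, hX (t + s) (by linarith) ]
  have hkey : (∑ j ∈ Icc 1 k,
      (exp (-(μ * t)) * (μ * t) ^ (k - j) / ((k - j).factorial : ℝ) / SB) *
        ∑ n ∈ range j, exp (-(μ * s)) * (μ * s) ^ n / (n.factorial : ℝ)) = SA / SB := by
    have := erlang_key k hk (μ * t) (μ * s)
    rw [hSA]
    have harg : μ * (t + s) = μ * t + μ * s := by ring
    rw [harg, ← this, Finset.sum_div]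
    refine Finset.sum_congr rfl fun j _ ↦ ?_
    ring
  rw [hkey, ENNReal.ofReal_div_of_pos hSBpos, ENNReal.div_eq_inv_mul]
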